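/- arXiv:1802.04555 — 5 statements merged into one kernel-verified Lean document; each statement's English description precedes it below -/
import Mathlib

section
/- If f₁, f₂ : 𝒳 → ℝ are nonnegative, monotone nonincreasing, and DR-supermodular, then their pointwise product f(x) = f₁(x)·f₂(x) is also nonnegative, monotone nonincreasing, and DR-supermodular. -/
/-- `x` lies in the lattice `𝒳`: each coordinate is a nonnegative integer multiple of `δ`. -/
def InLattice {d : ℕ} (δ : ℝ) (x : Fin d → ℝ) : Prop := ∀ i, ∃ n : ℕ, x i = n * δ

/-- The `i`-th standard unit vector of `ℝ^d`. -/
def eVec {d : ℕ} (i : Fin d) : Fin d → ℝ := Pi.single i 1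

lemma InLattice.add_step {d : ℕ} {δ : ℝ} {x : Fin d → ℝ} (hx : InLattice δ x) (i : Fin d) :
    InLattice δ (x + δ • eVec i) := by
  intro j
  obtain ⟨n, hn⟩ := hx j
  by_cases h : j = i
  · subst h
    exact ⟨n + 1, by simp [eVec, Pi.single_apply, hn]; push_cast; ring⟩
  · exact ⟨n, by simp [eVec, Pi.single_apply, h, hn]⟩

lemma le_add_step {d : ℕ} {δ : ℝ} (hδ : 0 < δ) (x : Fin d → ℝ) (i : Fin d) :
    x ≤ x + δ • eVec i := by
  intro j
  simp only [Pi.add_apply, Pi.smul_apply, eVec, Pi.single_apply, smul_eq_mul]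
  by_cases h : j = i <;> simp [h] <;> linarith

/-- If `f₁, f₂ : 𝒳 → ℝ` are nonnegative, monotone nonincreasing, and DR-supermodular,
then their pointwise product is also nonnegative, monotone nonincreasing, and DR-supermodular. -/
theorem product_nonincreasing_DRsupermodular {d : ℕ} (hd : 1 ≤ d) (δ : ℝ) (hδ : 0 < δ)
    (f₁ f₂ : (Fin d → ℝ) → ℝ)
    (h₁nonneg : ∀ x, InLattice δ x → 0 ≤ f₁ x)
    (h₂nonneg : ∀ x, InLattice δ x → 0 ≤ f₂ x)
    (h₁anti : ∀ x y, InLattice δ x → InLattice δ y → x ≤ y → f₁ y ≤ f₁ x)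
    (h₂anti : ∀ x y, InLattice δ x → InLattice δ y → x ≤ y → f₂ y ≤ f₂ x)
    (h₁super : ∀ x y, InLattice δ x → InLattice δ y → x ≤ y → ∀ i : Fin d,
      f₁ (x + δ • eVec i) - f₁ x ≤ f₁ (y + δ • eVec i) - f₁ y)
    (h₂super : ∀ x y, InLattice δ x → InLattice δ y → x ≤ y → ∀ i : Fin d,
      f₂ (x + δ • eVec i) - f₂ x ≤ f₂ (y + δ • eVec i) - f₂ y) :
    (∀ x, InLattice δ x → 0 ≤ f₁ x * f₂ x) ∧
    (∀ x y, InLattice δ x → InLattice δ y → x ≤ y → f₁ y * f₂ y ≤ f₁ x * f₂ x) ∧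
    (∀ x y, InLattice δ x → InLattice δ y → x ≤ y → ∀ i : Fin d,
      f₁ (x + δ • eVec i) * f₂ (x + δ • eVec i) - f₁ x * f₂ x ≤
      f₁ (y + δ • eVec i) * f₂ (y + δ • eVec i) - f₁ y * f₂ y) := by
  refine ⟨fun x hx => mul_nonneg (h₁nonneg x hx) (h₂nonneg x hx), ?_, ?_⟩
  · intro x y hx hy hxy
    exact mul_le_mul (h₁anti x y hx hy hxy) (h₂anti x y hx hy hxy)
      (h₂nonneg y hy) (h₁nonneg x hx)
  · intro x y hx hy hxy i
    have hx' := hx.add_step i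
    have hy' := hy.add_step i
    have hxy' : x + δ • eVec i ≤ y + δ • eVec i := fun j => by
      have := hxy j; simp only [Pi.add_apply]; linarith
    have hxx' := le_add_step hδ x i
    have hyy' := le_add_step hδ y i
    have hac : f₁ (y + δ • eVec i) ≤ f₁ (x + δ • eVec i) := h₁anti _ _ hx' hy' hxy'
    have hBE : f₂ y ≤ f₂ x := h₂anti _ _ hx hy hxy
    have hbB : f₂ (x + δ • eVec i) ≤ f₂ x := h₂anti _ _ hx hx' hxx'
    have haA : f₁ (x + δ • eVec i) ≤ f₁ x := h₁anti _ _ hx hx' hxx'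
    have hc0 : 0 ≤ f₁ (y + δ • eVec i) := h₁nonneg _ hy'
    have hE0 : 0 ≤ f₂ y := h₂nonneg _ hy
    have hs1 := h₁super x y hx hy hxy i
    have hs2 := h₂super x y hx hy hxy i
    nlinarith [mul_le_mul_of_nonpos_right hac (by linarith : f₂ (x + δ • eVec i) - f₂ x ≤ 0),
      mul_le_mul_of_nonpos_right hBE (by linarith : f₁ (x + δ • eVec i) - f₁ x ≤ 0),
      mul_le_mul_of_nonneg_left hs2 hc0,
      mul_le_mul_of_nonneg_left hs1 hE0]
end

section
/- Let V be a finite set, let σ : 2^V → ℝ be nonnegative, monotone, and submodular, and for each v ∈ V let h_v : 𝒳 → [0,1] be monotone and DR-submodular. Then the function g(x) = Σ_{S⊆V} σ(S) · ∏_{u∈S} h_u(x) · ∏_{v∈V∖S} (1 − h_v(x)) is monotone and DR-submodular on 𝒳. -/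
set_option linter.unusedSectionVars false

section Aux
variable {V : Type*} [Fintype V] [DecidableEq V]

/-- Generalized multilinear extension: ground set `Kᶜ`. -/
def Mfun (c : Finset V → ℝ) (K : Finset V) (p : V → ℝ) : ℝ :=
  ∑ S ∈ Kᶜ.powerset, c S * ((∏ u ∈ S, p u) * ∏ w ∈ Kᶜ \ S, (1 - p w))

lemma Mfun_indep (c : Finset V → ℝ) (K : Finset V) (p : V → ℝ) {v : V} (hv : v ∈ K) (t : ℝ) :
    Mfun c K (Function.update p v t) = Mfun c K p := by
  unfold Mfun
  refine Finset.sum_congr rfl fun S hS => ?_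
  rw [Finset.mem_powerset] at hS
  have h1 : ∀ u ∈ S, Function.update p v t u = p u := by
    intro u hu
    have : u ≠ v := by
      rintro rfl; exact (Finset.mem_compl.mp (hS hu)) hv
    simp [Function.update_of_ne this]
  have h2 : ∀ w ∈ Kᶜ \ S, (1 - Function.update p v t w) = 1 - p w := by
    intro w hw
    have : w ≠ v := by
      rintro rfl; exact (Finset.mem_compl.mp (Finset.mem_sdiff.mp hw).1) hv
    simp [Function.update_of_ne this]
  rw [Finset.prod_congr rfl h1, Finset.prod_congr rfl h2]

lemma Mfun_nonneg (c : Finset V → ℝ) (K : Finset V) (p : V → ℝ)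
    (hc : ∀ S, S ⊆ Kᶜ → 0 ≤ c S) (hp : ∀ u, 0 ≤ p u ∧ p u ≤ 1) :
    0 ≤ Mfun c K p := by
  unfold Mfun
  refine Finset.sum_nonneg fun S hS => ?_
  rw [Finset.mem_powerset] at hS
  refine mul_nonneg (hc S hS) (mul_nonneg (Finset.prod_nonneg fun u _ => (hp u).1)
    (Finset.prod_nonneg fun w _ => by linarith [(hp w).2]))

lemma Mfun_neg (c : Finset V → ℝ) (K : Finset V) (p : V → ℝ) :
    Mfun (fun S => -(c S)) K p = - Mfun c K p := by
  unfold Mfun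
  rw [← Finset.sum_neg_distrib]
  exact Finset.sum_congr rfl fun S _ => by ring

/-- Key decomposition: `Mfun` is affine in each coordinate of the ground set. -/
lemma Mfun_update (c : Finset V → ℝ) (K : Finset V) (p : V → ℝ) {v : V} (hv : v ∉ K) (t : ℝ) :
    Mfun c K (Function.update p v t)
      = Mfun c (insert v K) p
        + t * Mfun (fun S => c (insert v S) - c S) (insert v K) p := by
  have hvL : v ∉ (insert v K)ᶜ := by simp
  have hK : Kᶜ = insert v (insert v K)ᶜ := by
    rw [Finset.compl_insert]
    exact (Finset.insert_erase (Finset.mem_compl.mpr hv)).symm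
  unfold Mfun
  rw [hK]
  rw [Finset.sum_powerset_insert hvL (fun S => c S * ((∏ u ∈ S, Function.update p v t u)
    * ∏ w ∈ insert v (insert v K)ᶜ \ S, (1 - Function.update p v t w)))]
  rw [Finset.mul_sum]
  rw [← Finset.sum_add_distrib, ← Finset.sum_add_distrib]
  refine Finset.sum_congr rfl fun S hS => ?_
  rw [Finset.mem_powerset] at hS
  have hvS : v ∉ S := fun hvs => hvL (hS hvs)
  have e1 : ∀ u ∈ S, Function.update p v t u = p u := by
    intro u hu
    exact Function.update_of_ne (by rintro rfl; exact hvS hu) _ _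
  have e2 : insert v (insert v K)ᶜ \ S = insert v ((insert v K)ᶜ \ S) := by
    rw [Finset.insert_sdiff_of_notMem _ hvS]
  have e3 : insert v (insert v K)ᶜ \ insert v S = (insert v K)ᶜ \ S := by
    ext w
    simp only [Finset.mem_sdiff, Finset.mem_insert]
    constructor
    · rintro ⟨h1 | h1, h2⟩
      · exact absurd (Or.inl h1) h2
      · exact ⟨h1, fun hw => h2 (Or.inr hw)⟩
    · rintro ⟨h1, h2⟩
      exact ⟨Or.inr h1, fun hw => hw.elim (fun he => hvL (he ▸ h1)) h2⟩
  have hvLS : v ∉ (insert v K)ᶜ \ S := fun hw => hvL (Finset.mem_sdiff.mp hw).1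
  have e4 : ∀ w ∈ (insert v K)ᶜ \ S, (1 - Function.update p v t w) = 1 - p w := by
    intro w hw
    rw [Function.update_of_ne (by rintro rfl; exact hvLS hw)]
  -- first summand (v ∉ S)
  rw [Finset.prod_congr rfl e1, e2, Finset.prod_insert hvLS, Function.update_self,
    Finset.prod_congr rfl e4]
  -- second summand (insert v S)
  rw [Finset.prod_insert hvS, Function.update_self, Finset.prod_congr rfl e1, e3,
    Finset.prod_congr rfl e4]
  ring


/-- Coordinatewise mixture of two vectors. -/
def mixf (a b : V → ℝ) (T : Finset V) : V → ℝ := fun v => if v ∈ T then a v else b v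

lemma mixf_empty (a b : V → ℝ) : mixf a b ∅ = b := funext fun v => by simp [mixf]

lemma mixf_univ (a b : V → ℝ) : mixf a b Finset.univ = a := funext fun v => by simp [mixf]

lemma mixf_insert (a b : V → ℝ) (T : Finset V) (u : V) :
    mixf a b (insert u T) = Function.update (mixf a b T) u (a u) := by
  funext v
  by_cases hv : v = u
  · subst hv; simp [mixf]
  · simp [mixf, Function.update_of_ne hv, hv]

lemma mixf_box {a b : V → ℝ} (ha : ∀ v, 0 ≤ a v ∧ a v ≤ 1) (hb : ∀ v, 0 ≤ b v ∧ b v ≤ 1)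
    (T : Finset V) : ∀ v, 0 ≤ mixf a b T v ∧ mixf a b T v ≤ 1 := by
  intro v; unfold mixf
  split_ifs
  · exact ha v
  · exact hb v

lemma Mfun_mono (c : Finset V → ℝ) (K : Finset V)
    (hc : ∀ v, v ∉ K → ∀ S, S ⊆ (insert v K)ᶜ → 0 ≤ c (insert v S) - c S)
    (p q : V → ℝ) (hp : ∀ v, 0 ≤ p v ∧ p v ≤ 1) (hq : ∀ v, 0 ≤ q v ∧ q v ≤ 1)
    (hpq : ∀ v, p v ≤ q v) : Mfun c K p ≤ Mfun c K q := by
  have key : ∀ T : Finset V, Mfun c K p ≤ Mfun c K (mixf q p T) := by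
    intro T
    induction T using Finset.induction_on with
    | empty => rw [mixf_empty]
    | @insert a T ha ih =>
      rw [mixf_insert]
      set f := mixf q p T with hf
      by_cases haK : a ∈ K
      · rw [Mfun_indep c K f haK]; exact ih
      · rw [Mfun_update c K f haK]
        have hfa : f a = p a := by simp [hf, mixf, ha]
        have h0 : Mfun c K f
            = Mfun c (insert a K) f
              + p a * Mfun (fun S => c (insert a S) - c S) (insert a K) f := by
          conv_lhs => rw [← Function.update_eq_self a f, Mfun_update c K f haK, hfa]
        have hB : 0 ≤ Mfun (fun S => c (insert a S) - c S) (insert a K) f :=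
          Mfun_nonneg _ _ _ (fun S hS => hc a haK S hS) (mixf_box hq hp T)
        have hmul := mul_le_mul_of_nonneg_right (hpq a) hB
        linarith
  have := key Finset.univ
  rwa [mixf_univ] at this

lemma Mfun_anti (c : Finset V → ℝ) (K : Finset V)
    (hc : ∀ v, v ∉ K → ∀ S, S ⊆ (insert v K)ᶜ → c (insert v S) - c S ≤ 0)
    (p q : V → ℝ) (hp : ∀ v, 0 ≤ p v ∧ p v ≤ 1) (hq : ∀ v, 0 ≤ q v ∧ q v ≤ 1)
    (hpq : ∀ v, p v ≤ q v) : Mfun c K q ≤ Mfun c K p := by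
  have := Mfun_mono (fun S => -(c S)) K
    (fun v hv S hS => by
      show 0 ≤ -(c (insert v S)) - -(c S)
      have := hc v hv S hS; linarith) p q hp hq hpq
  rw [Mfun_neg, Mfun_neg] at this
  linarith

lemma Mfun_DR (σ : Finset V → ℝ)
    (hσsub : ∀ S T : Finset V, S ⊆ T → ∀ u ∉ T,
      σ (insert u T) - σ T ≤ σ (insert u S) - σ S)
    (P Q Q' R : V → ℝ)
    (hP : ∀ v, 0 ≤ P v ∧ P v ≤ 1) (hQ : ∀ v, 0 ≤ Q v ∧ Q v ≤ 1)
    (hQ' : ∀ v, 0 ≤ Q' v ∧ Q' v ≤ 1) (hR : ∀ v, 0 ≤ R v ∧ R v ≤ 1)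
    (hPQ : ∀ v, P v ≤ Q v) (hQQ' : ∀ v, Q v ≤ Q' v)
    (hRdef : ∀ v, R v = P v + (Q' v - Q v)) :
    Mfun σ ∅ Q' - Mfun σ ∅ Q ≤ Mfun σ ∅ R - Mfun σ ∅ P := by
  have hRQ' : ∀ v, R v ≤ Q' v := fun v => by have := hPQ v; rw [hRdef v]; linarith
  have key : ∀ T : Finset V,
      Mfun σ ∅ (mixf Q' Q T) - Mfun σ ∅ Q ≤ Mfun σ ∅ (mixf R P T) - Mfun σ ∅ P := by
    intro T
    induction T using Finset.induction_on with
    | empty => rw [mixf_empty, mixf_empty]; simp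
    | @insert a T ha ih =>
      rw [mixf_insert, mixf_insert]
      set fq := mixf Q' Q T with hfq
      set fp := mixf R P T with hfp
      have haK : a ∉ (∅ : Finset V) := by simp
      rw [Mfun_update σ ∅ fq haK, Mfun_update σ ∅ fp haK]
      have hfqa : fq a = Q a := by simp [hfq, mixf, ha]
      have hfpa : fp a = P a := by simp [hfp, mixf, ha]
      have hq0 : Mfun σ ∅ fq
          = Mfun σ (insert a ∅) fq
            + Q a * Mfun (fun S => σ (insert a S) - σ S) (insert a ∅) fq := by
        conv_lhs => rw [← Function.update_eq_self a fq, Mfun_update σ ∅ fq haK, hfqa]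
      have hp0 : Mfun σ ∅ fp
          = Mfun σ (insert a ∅) fp
            + P a * Mfun (fun S => σ (insert a S) - σ S) (insert a ∅) fp := by
        conv_lhs => rw [← Function.update_eq_self a fp, Mfun_update σ ∅ fp haK, hfpa]
      have hfpq : ∀ v, fp v ≤ fq v := by
        intro v; unfold fp fq; unfold mixf
        split_ifs
        · exact hRQ' v
        · exact hPQ v
      have hD : Mfun (fun S => σ (insert a S) - σ S) (insert a ∅) fq
          ≤ Mfun (fun S => σ (insert a S) - σ S) (insert a ∅) fp := by
        apply Mfun_anti _ _ _ _ _ (mixf_box hR hP T) (mixf_box hQ' hQ T) hfpq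
        intro v hv S hS
        have hva : v ≠ a := by simpa using hv
        have haS : a ∉ S := by
          intro haS
          have := hS haS
          rw [Finset.mem_compl] at this
          exact this (Finset.mem_insert_of_mem (Finset.mem_insert_self a ∅))
        have havS : a ∉ insert v S := by
          simp only [Finset.mem_insert]
          rintro (rfl | hc2)
          · exact hva rfl
          · exact haS hc2
        have h1 := hσsub S (insert v S) (Finset.subset_insert v S) a havS
        show σ (insert a (insert v S)) - σ (insert v S) - (σ (insert a S) - σ S) ≤ 0
        linarith
      have hnn : 0 ≤ Q' a - Q a := by have := hQQ' a; linarith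
      have hmul := mul_le_mul_of_nonneg_left hD hnn
      have e1 : Q' a * Mfun (fun S => σ (insert a S) - σ S) (insert a ∅) fq
          = Q a * Mfun (fun S => σ (insert a S) - σ S) (insert a ∅) fq
            + (Q' a - Q a) * Mfun (fun S => σ (insert a S) - σ S) (insert a ∅) fq := by
        ring
      have e2 : R a * Mfun (fun S => σ (insert a S) - σ S) (insert a ∅) fp
          = P a * Mfun (fun S => σ (insert a S) - σ S) (insert a ∅) fp
            + (Q' a - Q a) * Mfun (fun S => σ (insert a S) - σ S) (insert a ∅) fp := by
        rw [hRdef a]; ring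
      linarith
  have := key Finset.univ
  rwa [mixf_univ, mixf_univ] at this

end Aux

section Lat
variable {d : ℕ}

lemma eVec_apply (i j : Fin d) : eVec i j = if j = i then 1 else 0 := by
  simp [eVec, Pi.single_apply]

lemma InLattice_add {δ : ℝ} {x : Fin d → ℝ} (hx : InLattice δ x) (i : Fin d) :
    InLattice δ (x + δ • eVec i) := by
  intro j
  obtain ⟨n, hn⟩ := hx j
  by_cases hj : j = i
  · exact ⟨n + 1, by subst hj; simp [eVec_apply]; rw [hn]; push_cast; ring⟩
  · exact ⟨n, by simp [hn, eVec_apply, hj]⟩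

lemma le_add_eVec {δ : ℝ} (hδ : 0 < δ) (x : Fin d → ℝ) (i : Fin d) :
    x ≤ x + δ • eVec i := by
  intro j
  simp only [Pi.add_apply, Pi.smul_apply, smul_eq_mul, eVec_apply]
  split_ifs <;> nlinarith

end Lat


/-- Let `V` be finite, `σ : 2^V → ℝ` nonnegative, monotone and submodular, and each
`h v : 𝒳 → [0,1]` monotone and DR-submodular. Then
`g(x) = Σ_{S⊆V} σ(S) · ∏_{u∈S} h u x · ∏_{v∈V∖S}(1 − h v x)` is monotone and
DR-submodular on `𝒳`. -/
theorem spread_monotone_DRsubmodular {d : ℕ} (hd : 1 ≤ d) (δ : ℝ) (hδ : 0 < δ)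
    {V : Type*} [Fintype V] [DecidableEq V] (σ : Finset V → ℝ)
    (hσnonneg : ∀ S, 0 ≤ σ S)
    (hσmono : ∀ S T : Finset V, S ⊆ T → σ S ≤ σ T)
    (hσsub : ∀ S T : Finset V, S ⊆ T → ∀ u ∉ T,
      σ (insert u T) - σ T ≤ σ (insert u S) - σ S)
    (h : V → (Fin d → ℝ) → ℝ)
    (hrange : ∀ v, ∀ x, InLattice δ x → h v x ∈ Set.Icc (0 : ℝ) 1)
    (hmono : ∀ v, ∀ x y, InLattice δ x → InLattice δ y → x ≤ y → h v x ≤ h v y)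
    (hsub : ∀ v, ∀ x y, InLattice δ x → InLattice δ y → x ≤ y → ∀ i : Fin d,
      h v (y + δ • eVec i) - h v y ≤ h v (x + δ • eVec i) - h v x)
    (g : (Fin d → ℝ) → ℝ)
    (hg : ∀ x, g x = ∑ S ∈ (Finset.univ : Finset V).powerset,
      σ S * ((∏ u ∈ S, h u x) * ∏ v ∈ Sᶜ, (1 - h v x))) :
    (∀ x y, InLattice δ x → InLattice δ y → x ≤ y → g x ≤ g y) ∧
    (∀ x y, InLattice δ x → InLattice δ y → x ≤ y → ∀ i : Fin d,
      g (y + δ • eVec i) - g y ≤ g (x + δ • eVec i) - g x) := by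
  -- rewrite `g` as a multilinear extension
  have hg' : ∀ x, g x = Mfun σ ∅ (fun v => h v x) := by
    intro x
    rw [hg]
    unfold Mfun
    apply Finset.sum_congr
    · rw [Finset.compl_empty]
    · intro S hS
      congr 1
      congr 1
      rw [Finset.compl_empty, ← Finset.compl_eq_univ_sdiff]
  have hbox : ∀ x, InLattice δ x → ∀ v, 0 ≤ h v x ∧ h v x ≤ 1 := by
    intro x hx v
    exact ⟨(hrange v x hx).1, (hrange v x hx).2⟩
  have hcmono : ∀ v, v ∉ (∅ : Finset V) → ∀ S, S ⊆ (insert v ∅)ᶜ →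
      0 ≤ σ (insert v S) - σ S := by
    intro v _ S _
    have := hσmono S (insert v S) (Finset.subset_insert v S)
    linarith
  constructor
  · intro x y hx hy hxy
    rw [hg' x, hg' y]
    exact Mfun_mono σ ∅ hcmono _ _ (hbox x hx) (hbox y hy)
      (fun v => hmono v x y hx hy hxy)
  · intro x y hx hy hxy i
    have hx' := InLattice_add hx i
    have hy' := InLattice_add hy i
    have hxx' := le_add_eVec hδ x i
    have hyy' := le_add_eVec hδ y i
    set P : V → ℝ := fun v => h v x with hPdef
    set P' : V → ℝ := fun v => h v (x + δ • eVec i) with hP'def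
    set Q : V → ℝ := fun v => h v y with hQdef
    set Q' : V → ℝ := fun v => h v (y + δ • eVec i) with hQ'def
    set R : V → ℝ := fun v => P v + (Q' v - Q v) with hRdef
    have hP : ∀ v, 0 ≤ P v ∧ P v ≤ 1 := hbox x hx
    have hP' : ∀ v, 0 ≤ P' v ∧ P' v ≤ 1 := hbox _ hx'
    have hQ : ∀ v, 0 ≤ Q v ∧ Q v ≤ 1 := hbox y hy
    have hQ' : ∀ v, 0 ≤ Q' v ∧ Q' v ≤ 1 := hbox _ hy'
    have hPQ : ∀ v, P v ≤ Q v := fun v => hmono v x y hx hy hxy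
    have hQQ' : ∀ v, Q v ≤ Q' v := fun v => hmono v y _ hy hy' hyy'
    have hPP' : ∀ v, P v ≤ P' v := fun v => hmono v x _ hx hx' hxx'
    have hDR : ∀ v, Q' v - Q v ≤ P' v - P v := fun v => hsub v x y hx hy hxy i
    have hRP' : ∀ v, R v ≤ P' v := fun v => by have := hDR v; simp only [hRdef]; linarith
    have hR : ∀ v, 0 ≤ R v ∧ R v ≤ 1 := by
      intro v
      have h1 := hQQ' v
      have h2 := (hP v).1
      have h3 := (hP' v).2
      have h4 := hRP' v
      constructor
      · simp only [hRdef]; linarith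
      · linarith
    have step1 : Mfun σ ∅ Q' - Mfun σ ∅ Q ≤ Mfun σ ∅ R - Mfun σ ∅ P :=
      Mfun_DR σ hσsub P Q Q' R hP hQ hQ' hR hPQ hQQ' (fun v => rfl)
    have step2 : Mfun σ ∅ R ≤ Mfun σ ∅ P' :=
      Mfun_mono σ ∅ hcmono _ _ hR hP' hRP'
    rw [hg', hg', hg', hg']
    show Mfun σ ∅ Q' - Mfun σ ∅ Q ≤ Mfun σ ∅ P' - Mfun σ ∅ P
    linarith
end

section
/- Let S ⊆ [d] and for each j ∈ S let q_j : ℝ_{≥0} → [0,1] be nondecreasing and concave. Then the function h(x) = 1 − ∏_{j∈S}(1 − q_j(x_j)) is nonnegative, monotone, and DR-submodular on 𝒳. -/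
open Finset Function

theorem ConcaveOn.add_sub_le_add_sub_of_le {𝕜 : Type*} [Field 𝕜] [LinearOrder 𝕜]
    [IsStrictOrderedRing 𝕜] {s : Set 𝕜} {f : 𝕜 → 𝕜} (hf : ConcaveOn 𝕜 s f) {a b δ : 𝕜}
    (ha : a ∈ s) (hb : b + δ ∈ s) (hab : a ≤ b) (hδ : 0 ≤ δ) : f (b + δ) - f b ≤ f (a + δ) - f a := by
  obtain rfl | hab := hab.eq_or_lt
  · rfl
  have hc : 0 < b + δ - a := by linarith
  set t := δ / (b + δ - a)
  have ht : t * (b + δ - a) = δ := div_mul_cancel₀ δ hc.ne'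
  have ht₀ : 0 ≤ t := div_nonneg hδ hc.le
  have ht₁ : 0 ≤ 1 - t := sub_nonneg.2 <| (div_le_one hc).2 (by linarith)
  -- `a + δ` and `b` are the combinations of `a` and `b + δ` with weights `(1 - t, t)`, `(t, 1 - t)`
  have h₁ := hf.2 ha hb ht₁ ht₀ (sub_add_cancel 1 t)
  have h₂ := hf.2 ha hb ht₀ ht₁ (add_sub_cancel t 1)
  rw [show (1 - t) • a + t • (b + δ) = a + δ by simp only [smul_eq_mul]; linear_combination ht]
    at h₁
  rw [show t • a + (1 - t) • (b + δ) = b by simp only [smul_eq_mul]; linear_combination -ht] at h₂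
  simp only [smul_eq_mul] at h₁ h₂
  linarith

theorem Finset.prod_one_sub_le_prod_one_sub {ι R : Type*} [CommRing R] [PartialOrder R]
    [IsOrderedRing R] {S : Finset ι} {a b : ι → R}
    (hab : ∀ j ∈ S, a j ≤ b j) (hb : ∀ j ∈ S, b j ≤ 1) :
    ∏ j ∈ S, (1 - b j) ≤ ∏ j ∈ S, (1 - a j) :=
  prod_le_prod (fun j hj => sub_nonneg.2 (hb j hj)) fun j hj => sub_le_sub_left (hab j hj) 1

theorem Finset.prod_sub_prod_update_of_mem {ι α R : Type*} [CommRing R] [DecidableEq ι]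
    {S : Finset ι} {i : ι} (hi : i ∈ S) (g : ι → α → R) (x : ι → α) (t : α) :
    ∏ j ∈ S, g j (x j) - ∏ j ∈ S, g j (update x i t j)
      = (g i (x i) - g i t) * ∏ j ∈ S.erase i, g j (x j) := by
  simp only [apply_update g, prod_update_of_mem hi, sdiff_singleton_eq_erase,
    ← mul_prod_erase S (fun j => g j (x j)) hi]
  ring

theorem add_smul_eVec {d : ℕ} (x : Fin d → ℝ) (δ : ℝ) (i : Fin d) :
    x + δ • eVec i = update x i (x i + δ) := by
  ext j
  rcases eq_or_ne j i with rfl | hji <;> simp [eVec, *]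

theorem InLattice.nonneg {d : ℕ} {δ : ℝ} {x : Fin d → ℝ} (hx : InLattice δ x) (hδ : 0 ≤ δ) :
    0 ≤ x := fun i => by
  obtain ⟨n, hn⟩ := hx i
  rw [hn]
  positivity

section Activation

variable {ι : Type*} {S : Finset ι} {q : ι → ℝ → ℝ}

theorem prod_one_sub_apply_le_one (hrange : ∀ j ∈ S, ∀ t : ℝ, 0 ≤ t → q j t ∈ Set.Icc (0 : ℝ) 1)
    {x : ι → ℝ} (hx : 0 ≤ x) : ∏ j ∈ S, (1 - q j (x j)) ≤ 1 := by
  simpa using prod_one_sub_le_prod_one_sub (a := 0) (fun j hj => (hrange j hj _ (hx j)).1)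
    fun j hj => (hrange j hj _ (hx j)).2

theorem prod_one_sub_apply_le_of_le (hrange : ∀ j ∈ S, ∀ t : ℝ, 0 ≤ t → q j t ∈ Set.Icc (0 : ℝ) 1)
    (hmono : ∀ j ∈ S, MonotoneOn (q j) (Set.Ici 0)) {x y : ι → ℝ} (hx : 0 ≤ x) (hxy : x ≤ y) :
    ∏ j ∈ S, (1 - q j (y j)) ≤ ∏ j ∈ S, (1 - q j (x j)) :=
  prod_one_sub_le_prod_one_sub (fun j hj => hmono j hj (hx j) (hx.trans hxy j) (hxy j))
    fun j hj => (hrange j hj _ (hx.trans hxy j)).2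

theorem prod_one_sub_apply_sub_update_le_of_le [DecidableEq ι]
    (hrange : ∀ j ∈ S, ∀ t : ℝ, 0 ≤ t → q j t ∈ Set.Icc (0 : ℝ) 1)
    (hmono : ∀ j ∈ S, MonotoneOn (q j) (Set.Ici 0)) (hconc : ∀ j ∈ S, ConcaveOn ℝ (Set.Ici 0) (q j))
    {x y : ι → ℝ} (hx : 0 ≤ x) (hxy : x ≤ y) {δ : ℝ} (hδ : 0 ≤ δ) (i : ι) :
    ∏ j ∈ S, (1 - q j (y j)) - ∏ j ∈ S, (1 - q j (update y i (y i + δ) j))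
      ≤ ∏ j ∈ S, (1 - q j (x j)) - ∏ j ∈ S, (1 - q j (update x i (x i + δ) j)) := by
  by_cases hi : i ∈ S
  swap
  · simp only [apply_update (fun j t => 1 - q j t), prod_update_of_notMem hi, sub_self, le_refl]
  have hy : 0 ≤ y := hx.trans hxy
  simp only [prod_sub_prod_update_of_mem hi (fun j t => 1 - q j t), sub_sub_sub_cancel_left]
  have hyδ : y i + δ ∈ Set.Ici 0 := add_nonneg (hy i) hδ
  have hgain_y : 0 ≤ q i (y i + δ) - q i (y i) :=
    sub_nonneg.2 <| hmono i hi (hy i) hyδ (le_add_of_nonneg_right hδ)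
  have hgain : q i (y i + δ) - q i (y i) ≤ q i (x i + δ) - q i (x i) :=
    (hconc i hi).add_sub_le_add_sub_of_le (hx i) hyδ (hxy i) hδ
  have hrest : ∏ j ∈ S.erase i, (1 - q j (y j)) ≤ ∏ j ∈ S.erase i, (1 - q j (x j)) :=
    prod_one_sub_apply_le_of_le (fun j hj => hrange j (mem_of_mem_erase hj))
      (fun j hj => hmono j (mem_of_mem_erase hj)) hx hxy
  exact mul_le_mul hgain hrest
    (prod_nonneg fun j hj => sub_nonneg.2 (hrange j (mem_of_mem_erase hj) _ (hy j)).2)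
    (hgain_y.trans hgain)

end Activation

theorem activation_nonneg_monotone_DRsubmodular_general {d : ℕ} (δ : ℝ) (hδ : 0 < δ)
    (S : Finset (Fin d)) (q : Fin d → ℝ → ℝ)
    (hrange : ∀ j ∈ S, ∀ t : ℝ, 0 ≤ t → q j t ∈ Set.Icc (0 : ℝ) 1)
    (hmono : ∀ j ∈ S, MonotoneOn (q j) (Set.Ici (0 : ℝ)))
    (hconc : ∀ j ∈ S, ConcaveOn ℝ (Set.Ici (0 : ℝ)) (q j))
    (h : (Fin d → ℝ) → ℝ)
    (hh : ∀ x, h x = 1 - ∏ j ∈ S, (1 - q j (x j))) :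
    (∀ x, InLattice δ x → 0 ≤ h x) ∧
    (∀ x y, InLattice δ x → InLattice δ y → x ≤ y → h x ≤ h y) ∧
    (∀ x y, InLattice δ x → InLattice δ y → x ≤ y → ∀ i : Fin d,
      h (y + δ • eVec i) - h y ≤ h (x + δ • eVec i) - h x) := by
  obtain rfl : h = fun x => 1 - ∏ j ∈ S, (1 - q j (x j)) := funext hh
  refine ⟨fun x hx => ?_, fun x y hx _ hxy => ?_, fun x y hx _ hxy i => ?_⟩
  · exact sub_nonneg.2 (prod_one_sub_apply_le_one hrange (hx.nonneg hδ.le))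
  · exact sub_le_sub_left (prod_one_sub_apply_le_of_le hrange hmono (hx.nonneg hδ.le) hxy) 1
  · simp only [add_smul_eVec, sub_sub_sub_cancel_left]
    exact prod_one_sub_apply_sub_update_le_of_le hrange hmono hconc (hx.nonneg hδ.le) hxy hδ.le i

/-- Let `S ⊆ [d]` and for each `j ∈ S` let `q j : ℝ_{≥0} → [0,1]` be nondecreasing and
concave. Then `h(x) = 1 − ∏_{j∈S}(1 − q j (x j))` is nonnegative, monotone, and
DR-submodular on `𝒳`. -/
theorem activation_nonneg_monotone_DRsubmodular {d : ℕ} (hd : 1 ≤ d) (δ : ℝ) (hδ : 0 < δ)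
    (S : Finset (Fin d)) (q : Fin d → ℝ → ℝ)
    (hrange : ∀ j ∈ S, ∀ t : ℝ, 0 ≤ t → q j t ∈ Set.Icc (0 : ℝ) 1)
    (hmono : ∀ j ∈ S, MonotoneOn (q j) (Set.Ici (0 : ℝ)))
    (hconc : ∀ j ∈ S, ConcaveOn ℝ (Set.Ici (0 : ℝ)) (q j))
    (h : (Fin d → ℝ) → ℝ)
    (hh : ∀ x, h x = 1 - ∏ j ∈ S, (1 - q j (x j))) :
    (∀ x, InLattice δ x → 0 ≤ h x) ∧
    (∀ x y, InLattice δ x → InLattice δ y → x ≤ y → h x ≤ h y) ∧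
    (∀ x y, InLattice δ x → InLattice δ y → x ≤ y → ∀ i : Fin d,
      h (y + δ • eVec i) - h y ≤ h (x + δ • eVec i) - h x) :=
  activation_nonneg_monotone_DRsubmodular_general δ hδ S q hrange hmono hconc h hh
end

section
/- Let b ∈ ℕ with b ≥ 1 and let U = [d] × [b]. For A ⊆ U and j ∈ [d] let A^{(j)} = A ∩ ({j} × [b]), and let x^A ∈ 𝒳 be the vector with j-th coordinate x^A_j = |A^{(j)}|·δ. If f : 𝒳 → ℝ is monotone and DR-submodular, then the set function f^U : 2^U → ℝ defined by f^U(A) = f(x^A) is monotone and submodular. -/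
/-- The vector `x^A ∈ 𝒳` associated with `A ⊆ U = [d] × [b]`: its `j`-th coordinate is
`|A ∩ ({j} × [b])| · δ`. -/
def vecOfSet {d b : ℕ} (δ : ℝ) (A : Finset (Fin d × Fin b)) : Fin d → ℝ :=
  fun j => ((A.filter (fun p => p.1 = j)).card : ℝ) * δ

section vecOfSet

variable {d b : ℕ}

lemma vecOfSet_inLattice (δ : ℝ) (A : Finset (Fin d × Fin b)) : InLattice δ (vecOfSet δ A) :=
  fun _ => ⟨_, rfl⟩

lemma vecOfSet_mono {δ : ℝ} (hδ : 0 ≤ δ) {A B : Finset (Fin d × Fin b)} (h : A ⊆ B) :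
    vecOfSet δ A ≤ vecOfSet δ B := fun j =>
  mul_le_mul_of_nonneg_right
    (Nat.cast_le.mpr (Finset.card_le_card (Finset.filter_subset_filter (·.1 = j) h))) hδ

lemma vecOfSet_insert (δ : ℝ) {A : Finset (Fin d × Fin b)} {u : Fin d × Fin b} (hu : u ∉ A) :
    vecOfSet δ (insert u A) = vecOfSet δ A + δ • eVec u.1 := by
  funext j
  simp only [vecOfSet, eVec, Finset.filter_insert, Pi.add_apply, Pi.smul_apply, smul_eq_mul]
  by_cases h : u.1 = j
  · subst h
    rw [if_pos rfl, Finset.card_insert_of_notMem (fun hu' => hu (Finset.mem_filter.1 hu').1),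
      Pi.single_eq_same]
    push_cast
    ring
  · rw [if_neg h, Pi.single_eq_of_ne (Ne.symm h)]
    ring

end vecOfSet

theorem setFunction_monotone_submodular_general {d : ℕ} (δ : ℝ) (hδ : 0 < δ)
    (b : ℕ)
    (f : (Fin d → ℝ) → ℝ)
    (hmono : ∀ x y : Fin d → ℝ, InLattice δ x → InLattice δ y → x ≤ y → f x ≤ f y)
    (hsub : ∀ x y : Fin d → ℝ, InLattice δ x → InLattice δ y → x ≤ y → ∀ i : Fin d,
      f (y + δ • eVec i) - f y ≤ f (x + δ • eVec i) - f x)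
    (fU : Finset (Fin d × Fin b) → ℝ)
    (hfU : ∀ A, fU A = f (vecOfSet δ A)) :
    (∀ A B : Finset (Fin d × Fin b), A ⊆ B → fU A ≤ fU B) ∧
    (∀ A B : Finset (Fin d × Fin b), A ⊆ B → ∀ u ∉ B,
      fU (insert u B) - fU B ≤ fU (insert u A) - fU A) := by
  refine ⟨fun A B hAB => ?_, fun A B hAB u hu => ?_⟩
  · rw [hfU, hfU]
    exact hmono _ _ (vecOfSet_inLattice δ A) (vecOfSet_inLattice δ B) (vecOfSet_mono hδ.le hAB)
  · rw [hfU, hfU, hfU, hfU, vecOfSet_insert δ hu, vecOfSet_insert δ (fun h => hu (hAB h))]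
    exact hsub _ _ (vecOfSet_inLattice δ A) (vecOfSet_inLattice δ B) (vecOfSet_mono hδ.le hAB) u.1

/-- If `f : 𝒳 → ℝ` is monotone and DR-submodular, then the set function
`f^U(A) = f(x^A)` on `U = [d] × [b]` is monotone and submodular. -/
theorem setFunction_monotone_submodular {d : ℕ} (hd : 1 ≤ d) (δ : ℝ) (hδ : 0 < δ)
    (b : ℕ) (hb : 1 ≤ b)
    (f : (Fin d → ℝ) → ℝ)
    (hmono : ∀ x y : Fin d → ℝ, InLattice δ x → InLattice δ y → x ≤ y → f x ≤ f y)
    (hsub : ∀ x y : Fin d → ℝ, InLattice δ x → InLattice δ y → x ≤ y → ∀ i : Fin d,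
      f (y + δ • eVec i) - f y ≤ f (x + δ • eVec i) - f x)
    (fU : Finset (Fin d × Fin b) → ℝ)
    (hfU : ∀ A, fU A = f (vecOfSet δ A)) :
    (∀ A B : Finset (Fin d × Fin b), A ⊆ B → fU A ≤ fU B) ∧
    (∀ A B : Finset (Fin d × Fin b), A ⊆ B → ∀ u ∉ B,
      fU (insert u B) - fU B ≤ fU (insert u A) - fU A) :=
  setFunction_monotone_submodular_general δ hδ b f hmono hsub fU hfU
end

section
/- Let b ∈ 𝒳 and let B = { x ∈ 𝒳 : x ≤ b } be the box below b. Suppose f : B → ℝ is monotone on B (f(x) ≤ f(y) for x ≤ y ≤ b) and DR-submodular on B (f(x + δe_i) − f(x) ≥ f(y + δe_i) − f(y) whenever x ≤ y, y + δe_i ≤ b, and i ∈ [d]). Define the clamped extension f̃ : 𝒳 → ℝ by f̃(x) = f(x ∧ b), where (x ∧ b)_i = min(x_i, b_i) for each i. Then f̃ is monotone and DR-submodular on all of 𝒳. -/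
/-- If `f` is monotone and DR-submodular on the box `B = {x ∈ 𝒳 : x ≤ b}`, then the clamped
extension `f̃(x) = f(x ∧ b)` (coordinatewise minimum with `b`) is monotone and DR-submodular
on all of `𝒳`. -/
theorem clamped_extension_monotone_DRsubmodular {d : ℕ} (hd : 1 ≤ d) (δ : ℝ) (hδ : 0 < δ)
    (b : Fin d → ℝ) (hb : InLattice δ b)
    (f : (Fin d → ℝ) → ℝ)
    (hmono : ∀ x y : Fin d → ℝ, InLattice δ x → InLattice δ y →
      x ≤ y → y ≤ b → f x ≤ f y)
    (hsub : ∀ x y : Fin d → ℝ, InLattice δ x → InLattice δ y → x ≤ y → ∀ i : Fin d,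
      y + δ • eVec i ≤ b → f (y + δ • eVec i) - f y ≤ f (x + δ • eVec i) - f x)
    (fTilde : (Fin d → ℝ) → ℝ)
    (hfTilde : ∀ x : Fin d → ℝ, fTilde x = f (fun i => min (x i) (b i))) :
    (∀ x y : Fin d → ℝ, InLattice δ x → InLattice δ y → x ≤ y → fTilde x ≤ fTilde y) ∧
    (∀ x y : Fin d → ℝ, InLattice δ x → InLattice δ y → x ≤ y → ∀ i : Fin d,
      fTilde (y + δ • eVec i) - fTilde y ≤ fTilde (x + δ • eVec i) - fTilde x) := by
  set c : (Fin d → ℝ) → (Fin d → ℝ) := fun x => fun i => min (x i) (b i) with hc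
  have hclat : ∀ x, InLattice δ x → InLattice δ (c x) := by
    intro x hx i
    obtain ⟨n, hn⟩ := hx i
    obtain ⟨m, hm⟩ := hb i
    exact ⟨min n m, by
      simp only [hc, hn, hm]
      rcases le_total n m with h | h
      · rw [min_eq_left, min_eq_left h]
        exact mul_le_mul_of_nonneg_right (by exact_mod_cast h) hδ.le
      · rw [min_eq_right, min_eq_right h]
        exact mul_le_mul_of_nonneg_right (by exact_mod_cast h) hδ.le⟩
  have hcmono : ∀ x y : Fin d → ℝ, x ≤ y → c x ≤ c y := by
    intro x y hxy i
    exact min_le_min (hxy i) le_rfl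
  have hcle : ∀ x : Fin d → ℝ, c x ≤ b := fun x i => min_le_right _ _
  have heval : ∀ (x : Fin d → ℝ) (i j : Fin d),
      (x + δ • eVec i) j = x j + (if j = i then δ else 0) := by
    intro x i j
    simp only [Pi.add_apply, Pi.smul_apply, eVec, smul_eq_mul]
    rcases eq_or_ne j i with h | h
    · subst h; simp
    · simp [Pi.single_apply, h]
  have hlatadd : ∀ (x : Fin d → ℝ) (i : Fin d), InLattice δ x →
      InLattice δ (x + δ • eVec i) := by
    intro x i hx j
    obtain ⟨n, hn⟩ := hx j
    rcases eq_or_ne j i with h | h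
    · exact ⟨n + 1, by rw [heval, if_pos h, hn]; push_cast; ring⟩
    · exact ⟨n, by rw [heval, if_neg h, hn, add_zero]⟩
  -- key step: if x i + δ ≤ b i then c (x + δ e i) = c x + δ e i
  have hstep : ∀ (x : Fin d → ℝ) (i : Fin d), x i + δ ≤ b i →
      c (x + δ • eVec i) = c x + δ • eVec i := by
    intro x i hle
    funext j
    rw [hc]
    simp only
    rw [heval]
    rcases eq_or_ne j i with h | h
    · subst h
      rw [if_pos rfl, heval, if_pos rfl]
      rw [min_eq_left hle, min_eq_left (by linarith)]
    · rw [if_neg h, add_zero, heval, if_neg h, add_zero]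
  -- if b i ≤ x i then c (x + δ e i) = c x
  have hstop : ∀ (x : Fin d → ℝ) (i : Fin d), b i ≤ x i →
      c (x + δ • eVec i) = c x := by
    intro x i hle
    funext j
    rw [hc]
    simp only
    rw [heval]
    rcases eq_or_ne j i with h | h
    · subst h
      rw [if_pos rfl, min_eq_right (by linarith), min_eq_right hle]
    · rw [if_neg h, add_zero]
  -- lattice gap: x i < b i implies x i + δ ≤ b i
  have hgap : ∀ (x : Fin d → ℝ), InLattice δ x → ∀ i : Fin d, x i < b i → x i + δ ≤ b i := by
    intro x hx i hlt
    obtain ⟨n, hn⟩ := hx i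
    obtain ⟨m, hm⟩ := hb i
    rw [hn, hm] at hlt ⊢
    have hnm : n < m := by
      by_contra h
      push_neg at h
      exact absurd hlt (not_lt.2 (mul_le_mul_of_nonneg_right (by exact_mod_cast h) hδ.le))
    have : (n : ℝ) + 1 ≤ m := by exact_mod_cast hnm
    nlinarith
  constructor
  · intro x y hx hy hxy
    rw [hfTilde, hfTilde]
    exact hmono _ _ (hclat x hx) (hclat y hy) (hcmono x y hxy) (hcle y)
  · intro x y hx hy hxy i
    rw [hfTilde, hfTilde, hfTilde, hfTilde]
    show f (c (y + δ • eVec i)) - f (c y) ≤ f (c (x + δ • eVec i)) - f (c x)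
    rcases le_or_gt (b i) (x i) with hbx | hxb
    · have hby : b i ≤ y i := le_trans hbx (hxy i)
      rw [hstop x i hbx, hstop y i hby]
      simp
    · have hx' := hgap x hx i hxb
      rw [hstep x i hx']
      rcases le_or_gt (b i) (y i) with hby | hyb
      · rw [hstop y i hby]
        simp only [sub_self]
        have : f (c x) ≤ f (c x + δ • eVec i) := by
          have h1 : c x + δ • eVec i = c (x + δ • eVec i) := (hstep x i hx').symm
          rw [h1]
          refine hmono _ _ (hclat x hx) (hclat _ (hlatadd x i hx)) ?_ (hcle _)
          exact hcmono _ _ (fun j => by rw [heval]; split <;> linarith)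
        linarith
      · have hy' := hgap y hy i hyb
        rw [hstep y i hy']
        refine hsub _ _ (hclat x hx) (hclat y hy) (hcmono x y hxy) i ?_
        intro j
        rw [heval]
        rcases eq_or_ne j i with h | h
        · subst h
          rw [if_pos rfl]
          show y j ⊓ b j + δ ≤ b j
          rw [min_eq_left hyb.le]
          exact hy'
        · rw [if_neg h, add_zero]
          exact hcle y j
end
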